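/- Let m, n be positive integers, u, v integers with gcd(m,n) = u·n + v·m, and a, b nonzero elements of F_q. Then gcd(x^n - a, x^m - b) equals x^{gcd(n,m)} - a^u b^v if a^{m/gcd(m,n)} = b^{n/gcd(m,n)}, and equals 1 otherwise. -/
import Mathlib


open Polynomial

private lemma aux_dvd {F : Type*} [CommRing F] (s k : ℕ) (c : F) :
    (X ^ s - C c) ∣ (X ^ (s * k) - C (c ^ k)) := by
  rw [pow_mul, map_pow]
  exact sub_dvd_pow_sub_pow _ _ _

private lemma aux_const {F : Type*} [Field F] {p : F[X]} (hp : 0 < p.natDegree) {x : F}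
    (h : p ∣ C x) : x = 0 := by
  by_contra hx
  have := Polynomial.natDegree_le_of_dvd h (by simp [hx])
  simp [Polynomial.natDegree_C] at this
  omega

theorem stmt4 {F : Type*} [Field F] [Fintype F] [DecidableEq F]
    (m n : ℕ) (hn : 0 < n) (hm : 0 < m) (u v : ℤ)
    (huv : (Nat.gcd m n : ℤ) = u * n + v * m) (a b : F) (ha : a ≠ 0) (hb : b ≠ 0) :
    (a ^ (m / Nat.gcd m n) = b ^ (n / Nat.gcd m n) →
      gcd (X ^ n - C a) (X ^ m - C b) = X ^ Nat.gcd n m - C (a ^ u * b ^ v)) ∧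
    (a ^ (m / Nat.gcd m n) ≠ b ^ (n / Nat.gcd m n) →
      gcd (X ^ n - C a) (X ^ m - C b) = 1) := by
  set d := Nat.gcd m n with hdd
  have hd : 0 < d := Nat.gcd_pos_of_pos_left n hm
  have hdm : d ∣ m := Nat.gcd_dvd_left m n
  have hdn : d ∣ n := Nat.gcd_dvd_right m n
  -- arithmetic setup
  set t : ℤ := (u.natAbs : ℤ) + (v.natAbs : ℤ) with htdef
  have ht0 : 0 ≤ t := by positivity
  have hmd1 : (1 : ℤ) ≤ ((m / d : ℕ) : ℤ) := by
    exact_mod_cast Nat.div_pos (Nat.le_of_dvd hm hdm) hd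
  have hnd1 : (1 : ℤ) ≤ ((n / d : ℕ) : ℤ) := by
    exact_mod_cast Nat.div_pos (Nat.le_of_dvd hn hdn) hd
  have hU' : 0 ≤ u + t * ((m / d : ℕ) : ℤ) := by
    nlinarith [neg_abs_le u, abs_nonneg v, Int.abs_eq_natAbs u, Int.abs_eq_natAbs v,
      le_abs_self u, le_abs_self v]
  have hW' : 0 ≤ t * ((n / d : ℕ) : ℤ) - v := by
    nlinarith [le_abs_self v, abs_nonneg u, Int.abs_eq_natAbs u, Int.abs_eq_natAbs v]
  set U : ℕ := (u + t * ((m / d : ℕ) : ℤ)).toNat with hUdef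
  set W : ℕ := (t * ((n / d : ℕ) : ℤ) - v).toNat with hWdef
  have hUz : (U : ℤ) = u + t * ((m / d : ℕ) : ℤ) := Int.toNat_of_nonneg hU'
  have hWz : (W : ℤ) = t * ((n / d : ℕ) : ℤ) - v := Int.toNat_of_nonneg hW'
  have hnat : m / d * n = n / d * m := by
    calc m / d * n = m / d * (n / d * d) := by rw [Nat.div_mul_cancel hdn]
      _ = n / d * (m / d * d) := by ring
      _ = n / d * m := by rw [Nat.div_mul_cancel hdm]
  have hmnZ : ((m / d : ℕ) : ℤ) * n = ((n / d : ℕ) : ℤ) * m := by exact_mod_cast hnat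
  have hUWint : (U : ℤ) * n = (d : ℤ) + W * m := by
    rw [hUz, hWz]
    linear_combination -huv + t * hmnZ
  have hUW : U * n = d + W * m := by exact_mod_cast hUWint
  -- polynomial setup
  set A : F[X] := X ^ n - C a with hAdef
  set B : F[X] := X ^ m - C b with hBdef
  set g : F[X] := gcd A B with hgdef
  have hA0 : A ≠ 0 := X_pow_sub_C_ne_zero hn a
  have hg0 : g ≠ 0 := fun h => hA0 ((gcd_eq_zero_iff A B).mp h).1
  have hgmonic : g.Monic := by
    have := Polynomial.monic_normalize hg0
    rwa [hgdef, normalize_gcd] at this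
  have hbW : (b : F) ^ W ≠ 0 := pow_ne_zero _ hb
  set e : F := a ^ U * ((b : F) ^ W)⁻¹ with hedef
  -- g divides X^d - C e
  have hge : g ∣ X ^ d - C e := by
    have h1 : g ∣ X ^ (n * U) - C (a ^ U) := (gcd_dvd_left A B).trans (aux_dvd n U a)
    have h2 : g ∣ X ^ (m * W) - C ((b : F) ^ W) := (gcd_dvd_right A B).trans (aux_dvd m W b)
    have h4 : g ∣ (X ^ (n * U) - C (a ^ U)) - X ^ d * (X ^ (m * W) - C ((b : F) ^ W)) :=
      dvd_sub h1 (h2.mul_left _)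
    have h9 : C (((b : F) ^ W)⁻¹) * C ((b : F) ^ W) = 1 := by
      rw [← map_mul, inv_mul_cancel₀ hbW, map_one]
    have hid : C (((b : F) ^ W)⁻¹) *
        ((X ^ (n * U) - C (a ^ U)) - X ^ d * (X ^ (m * W) - C ((b : F) ^ W)))
        = X ^ d - C e := by
      rw [show n * U = d + m * W by rw [mul_comm n U, hUW, mul_comm W m], pow_add,
        show C e = C (a ^ U) * C (((b : F) ^ W)⁻¹) by rw [← map_mul, hedef]]
      linear_combination (X ^ d : F[X]) * h9
    exact hid ▸ h4.mul_left _
  -- if g is nonconstant then the compatibility condition holds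
  have key : 0 < g.natDegree → ∀ s : ℕ, d ∣ s → ∀ c0 : F, g ∣ X ^ s - C c0 →
      e ^ (s / d) = c0 := by
    intro hdeg s hds c0 hgd
    have h5 : g ∣ X ^ (d * (s / d)) - C (e ^ (s / d)) := hge.trans (aux_dvd d (s / d) e)
    rw [Nat.mul_div_cancel' hds] at h5
    have h6 : g ∣ C (e ^ (s / d) - c0) := by
      have h7 := dvd_sub hgd h5
      have h8 : (X ^ s - C c0) - (X ^ s - C (e ^ (s / d))) = C (e ^ (s / d) - c0) := by
        rw [map_sub]; ring
      rwa [h8] at h7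
    exact sub_eq_zero.mp (aux_const hdeg h6)
  have hcond : 0 < g.natDegree → a ^ (m / d) = b ^ (n / d) := by
    intro hdeg
    have hea : e ^ (n / d) = a := key hdeg n hdn a (gcd_dvd_left A B)
    have heb : e ^ (m / d) = b := key hdeg m hdm b (gcd_dvd_right A B)
    calc a ^ (m / d) = e ^ (n / d * (m / d)) := by rw [← hea, ← pow_mul]
      _ = b ^ (n / d) := by rw [mul_comm, pow_mul, heb]
  constructor
  · intro H
    -- c = a^u * b^v, show c^(n/d) = a and c^(m/d) = b
    have hdz : ((d : ℤ)) ≠ 0 := by exact_mod_cast hd.ne'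
    have hdvdnZ : (d : ℤ) * ((n / d : ℕ) : ℤ) = n := by exact_mod_cast Nat.mul_div_cancel' hdn
    have hdvdmZ : (d : ℤ) * ((m / d : ℕ) : ℤ) = m := by exact_mod_cast Nat.mul_div_cancel' hdm
    have hexp : u * ((n / d : ℕ) : ℤ) + ((m / d : ℕ) : ℤ) * v = 1 := by
      apply mul_left_cancel₀ hdz
      calc (d : ℤ) * (u * ((n / d : ℕ) : ℤ) + ((m / d : ℕ) : ℤ) * v)
          = u * ((d : ℤ) * ((n / d : ℕ) : ℤ)) + v * ((d : ℤ) * ((m / d : ℕ) : ℤ)) := by ring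
        _ = u * n + v * m := by rw [hdvdnZ, hdvdmZ]
        _ = (d : ℤ) * 1 := by rw [mul_one]; exact huv.symm
    have hab : (b : F) ^ ((( n / d : ℕ)) : ℤ) = a ^ (((m / d : ℕ)) : ℤ) := by
      rw [zpow_natCast, zpow_natCast]; exact H.symm
    have hba : (a : F) ^ ((( m / d : ℕ)) : ℤ) = b ^ (((n / d : ℕ)) : ℤ) := hab.symm
    set c : F := a ^ u * b ^ v with hcdef
    set nd : ℤ := ((n / d : ℕ) : ℤ) with hnddef
    set md : ℤ := ((m / d : ℕ) : ℤ) with hmddef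
    have hb1 : ((b : F) ^ v) ^ nd = a ^ (md * v) := by
      rw [← zpow_mul, mul_comm v nd, zpow_mul, hab, ← zpow_mul]
    have ha1 : ((a : F) ^ u) ^ md = b ^ (nd * u) := by
      rw [← zpow_mul, mul_comm u md, zpow_mul, hba, ← zpow_mul]
    have hcn : c ^ (n / d) = a := by
      calc c ^ (n / d) = c ^ nd := (zpow_natCast c (n / d)).symm
        _ = (a ^ u) ^ nd * (b ^ v) ^ nd := by rw [hcdef, mul_zpow]
        _ = a ^ (u * nd) * a ^ (md * v) := by rw [hb1, ← zpow_mul]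
        _ = a := by rw [← zpow_add₀ ha, hexp, zpow_one]
    have hcm : c ^ (m / d) = b := by
      calc c ^ (m / d) = c ^ md := (zpow_natCast c (m / d)).symm
        _ = (a ^ u) ^ md * (b ^ v) ^ md := by rw [hcdef, mul_zpow]
        _ = b ^ (nd * u) * b ^ (v * md) := by rw [ha1, ← zpow_mul]
        _ = b := by
            rw [← zpow_add₀ hb, show nd * u + v * md = 1 by linear_combination hexp, zpow_one]
    -- X^d - C c divides both A and B
    have hdvdA : (X ^ d - C c) ∣ A := by
      have := aux_dvd d (n / d) c
      rwa [Nat.mul_div_cancel' hdn, hcn] at this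
    have hdvdB : (X ^ d - C c) ∣ B := by
      have := aux_dvd d (m / d) c
      rwa [Nat.mul_div_cancel' hdm, hcm] at this
    have h1 : (X ^ d - C c) ∣ g := dvd_gcd hdvdA hdvdB
    -- deduce c = e, hence g ∣ X^d - C c
    have hdegd : (X ^ d - C c).natDegree = d := natDegree_X_pow_sub_C
    have hce : c = e := by
      have h2 : (X ^ d - C c) ∣ (X ^ d - C e) := h1.trans hge
      have h3 : (X ^ d - C c) ∣ C (c - e) := by
        have h7 := dvd_sub h2 (dvd_refl (X ^ d - C c))
        have h8 : (X ^ d - C e) - (X ^ d - C c) = C (c - e) := by rw [map_sub]; ring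
        rwa [h8] at h7
      exact sub_eq_zero.mp (aux_const (by rw [hdegd]; exact hd) h3)
    have hge' : g ∣ X ^ d - C c := by rw [hce]; exact hge
    have hmonic' : (X ^ d - C c).Monic := monic_X_pow_sub_C _ hd.ne'
    have heq := normalize_eq_normalize hge' h1
    rw [hgdef, normalize_gcd, hmonic'.normalize_eq_self] at heq
    rw [Nat.gcd_comm n m, ← hdd]
    exact heq
  · intro hne
    have hdeg0 : g.natDegree = 0 := by
      by_contra h
      exact hne (hcond (Nat.pos_of_ne_zero h))
    exact hgmonic.natDegree_eq_zero.mp hdeg0
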